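/- Let d = p² with p prime. Then KD^r = span_ℝ(A ∪ B ∪ C) if and only if KD⁺ = ConvHull(A ∪ B ∪ C). -/

import Mathlib

open Complex Matrix
open scoped ComplexOrder

noncomputable section

/-- `omega n = exp(2 π i / n)`, a primitive `n`-th root of unity. -/
def omega (n : ℕ) : ℂ := Complex.exp (2 * Real.pi * Complex.I / n)

/-- The standard basis vector `a i` of `ℂ^d`. -/
def stdVec (d : ℕ) (i : Fin d) : Fin d → ℂ := fun k => if k = i then 1 else 0

/-- The Fourier (DFT) basis vector `b j = (1/√d) ∑ i, ω_d^(i j) • a i`. -/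
def fourierVec (d : ℕ) (j : Fin d) : Fin d → ℂ :=
  fun i => ((1 / Real.sqrt d : ℝ) : ℂ) * omega d ^ (i.val * j.val)

/-- The rank-one projector `|v⟩⟨v|` of a vector `v`, as a matrix. -/
def proj (d : ℕ) (v : Fin d → ℂ) : Matrix (Fin d) (Fin d) ℂ :=
  Matrix.of fun i k => v i * (starRingEnd ℂ) (v k)

/-- The Kirkwood-Dirac quasiprobability `Q i j F = ⟨b j|a i⟩ * ⟨a i|F|b j⟩`. -/
def KDQ (d : ℕ) (F : Matrix (Fin d) (Fin d) ℂ) (i j : Fin d) : ℂ :=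
  (starRingEnd ℂ) (fourierVec d j i) * ∑ k, F i k * fourierVec d j k

/-- The set `KD⁺` of KD classical density matrices: positive semidefinite, trace one,
and all KD quasiprobabilities are nonnegative reals. -/
def KDplus (d : ℕ) : Set (Matrix (Fin d) (Fin d) ℂ) :=
  {ρ | ρ.PosSemidef ∧ ρ.trace = 1 ∧
    ∀ i j, (KDQ d ρ i j).im = 0 ∧ 0 ≤ (KDQ d ρ i j).re}

/-- The set `KD^r` of self-adjoint operators whose KD distribution is everywhere real. -/
def KDr (d : ℕ) : Set (Matrix (Fin d) (Fin d) ℂ) :=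
  {F | F.IsHermitian ∧ ∀ i j, (KDQ d F i j).im = 0}

/-- `A = {|a i⟩⟨a i| : i ∈ ℤ_d}`. -/
def setA (d : ℕ) : Set (Matrix (Fin d) (Fin d) ℂ) :=
  {M | ∃ i : Fin d, M = proj d (stdVec d i)}

/-- `B = {|b j⟩⟨b j| : j ∈ ℤ_d}`. -/
def setB (d : ℕ) : Set (Matrix (Fin d) (Fin d) ℂ) :=
  {M | ∃ j : Fin d, M = proj d (fourierVec d j)}

/-- For `d = p * q` : `ψ m s = (1/√q) ∑ k ∈ ℤ_q, ω_q^(s k) • a (k p + m)`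
(so the `i`-th coordinate is nonzero iff `i ≡ m [MOD p]`, with `k = i / p`). -/
def psiPQ (d p q : ℕ) (m : Fin p) (s : Fin q) : Fin d → ℂ :=
  fun i => if i.val % p = m.val then
    ((1 / Real.sqrt q : ℝ) : ℂ) * omega q ^ (s.val * (i.val / p)) else 0

/-- For `d = p * q` : `φ m' s' = (1/√p) ∑ k ∈ ℤ_p, ω_p^(s' k) • a (k q + m')`. -/
def phiPQ (d p q : ℕ) (m' : Fin q) (s' : Fin p) : Fin d → ℂ :=
  fun i => if i.val % q = m'.val then
    ((1 / Real.sqrt p : ℝ) : ℂ) * omega p ^ (s'.val * (i.val / q)) else 0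

/-- For `d = p ^ 2` : `C = {|ψ m s⟩⟨ψ m s| : m, s ∈ ℤ_p}`. -/
def setC2 (d p : ℕ) : Set (Matrix (Fin d) (Fin d) ℂ) :=
  {M | ∃ m s : Fin p, M = proj d (psiPQ d p p m s)}

/-- For `d = p * q` : `C = {|ψ m s⟩⟨ψ m s| : m ∈ ℤ_p, s ∈ ℤ_q}`. -/
def setC (d p q : ℕ) : Set (Matrix (Fin d) (Fin d) ℂ) :=
  {M | ∃ (m : Fin p) (s : Fin q), M = proj d (psiPQ d p q m s)}

/-- For `d = p * q` : `D = {|φ m' s'⟩⟨φ m' s'| : m' ∈ ℤ_q, s' ∈ ℤ_p}`. -/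
def setD (d p q : ℕ) : Set (Matrix (Fin d) (Fin d) ℂ) :=
  {M | ∃ (m' : Fin q) (s' : Fin p), M = proj d (phiPQ d p q m' s')}

/-- Matrix entries in the Fourier basis: `⟨b k|G|b j⟩`. -/
def entryB (d : ℕ) (G : Matrix (Fin d) (Fin d) ℂ) (k j : Fin d) : ℂ :=
  ∑ i, ∑ l, (starRingEnd ℂ) (fourierVec d k i) * G i l * fourierVec d j l

/-!
The generators have explicit KD distributions: `Q(|a_i'⟩⟨a_i'|) = δ_{i i'} / d`,
`Q(|b_j'⟩⟨b_j'|) = δ_{j j'} / d` and `Q(|ψ_{m s}⟩⟨ψ_{m s}|)_{ij} = [i ≡ m, j ≡ s (mod p)] / d`,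
and `Q` is injective. Hence `ρ = ∑ c_t g_t` has
`Q_{ij}(ρ) = (α_i + β_j + γ_{i mod p, j mod p}) / d`.
If moreover `ρ ∈ KD⁺`, subtracting from `α` and `β` their minima over each residue class and adding
these minima to `γ` does not change `Q(ρ)`, hence not `ρ`, and makes every coefficient nonnegative;
the coefficients then sum to `tr ρ = 1`, so `ρ ∈ conv(A ∪ B ∪ C)`.

Conversely, for `F ∈ KD^r` and `t` large, `F + t • 1` is positive semidefinite with a nonnegative
KD distribution, so it is a nonnegative multiple of a point of `KD⁺`; as `1` is one too, `F` lies in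
the span of `KD⁺`, which is the span of any set whose convex hull is `KD⁺`.
-/

lemma omega_ne_zero (n : ℕ) : omega n ≠ 0 := Complex.exp_ne_zero _

lemma isPrimitiveRoot_omega {n : ℕ} (hn : n ≠ 0) : IsPrimitiveRoot (omega n) n :=
  Complex.isPrimitiveRoot_exp n hn

lemma omega_zpow_eq_one_iff {n : ℕ} (hn : n ≠ 0) (t : ℤ) : omega n ^ t = 1 ↔ (n : ℤ) ∣ t :=
  (isPrimitiveRoot_omega hn).zpow_eq_one_iff_dvd t

lemma conj_omega_pow (n k : ℕ) : starRingEnd ℂ (omega n ^ k) = omega n ^ (-(k : ℤ)) := by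
  have h : starRingEnd ℂ (omega n) = (omega n)⁻¹ := by
    rw [omega, ← Complex.exp_conj, ← Complex.exp_neg]
    simp [map_div₀, Complex.conj_I, neg_div, map_ofNat]
  rw [map_pow, h, _root_.zpow_neg, zpow_natCast, inv_pow]

lemma conj_omega_pow_mul_omega_pow (n a b : ℕ) :
    starRingEnd ℂ (omega n ^ a) * omega n ^ b = omega n ^ ((b : ℤ) - a) := by
  rw [conj_omega_pow, ← zpow_natCast _ b, ← zpow_add₀ (omega_ne_zero n), neg_add_eq_sub]

lemma sum_omega_zpow {n : ℕ} (hn : n ≠ 0) (t : ℤ) :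
    ∑ k : Fin n, omega n ^ ((k : ℤ) * t) = if (n : ℤ) ∣ t then (n : ℂ) else 0 := by
  have hpow : ∀ k : Fin n, omega n ^ ((k : ℤ) * t) = (omega n ^ t) ^ (k : ℕ) := fun k => by
    rw [mul_comm, _root_.zpow_mul, zpow_natCast]
  simp only [hpow, Fin.sum_univ_eq_sum_range (fun k => (omega n ^ t) ^ k)]
  split_ifs with h
  · simp [(omega_zpow_eq_one_iff hn t).2 h]
  · have hn1 : (omega n ^ t) ^ n = 1 := by
      rw [← zpow_natCast, ← _root_.zpow_mul, mul_comm, _root_.zpow_mul,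
        (isPrimitiveRoot_omega hn).zpow_eq_one, _root_.one_zpow]
    rw [geom_sum_eq (fun h1 => h ((omega_zpow_eq_one_iff hn t).1 h1)), hn1, sub_self, zero_div]

lemma omega_sq_zpow_mul {p : ℕ} (hp : p ≠ 0) (t : ℤ) :
    omega (p ^ 2) ^ ((p : ℤ) * t) = omega p ^ t := by
  have h : omega (p ^ 2) ^ p = omega p := by
    rw [omega, omega, ← Complex.exp_nat_mul]
    congr 1
    have hp' : (p : ℂ) ≠ 0 := Nat.cast_ne_zero.2 hp
    push_cast
    field_simp
  rw [_root_.zpow_mul, zpow_natCast, h]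

lemma omega_sq_zpow_add_mul {p : ℕ} (hp : p ≠ 0) (x y : ℤ) :
    omega (p ^ 2) ^ (x + p * y) = omega (p ^ 2) ^ x * omega p ^ y := by
  rw [zpow_add₀ (omega_ne_zero _), omega_sq_zpow_mul hp]

lemma omega_sq_phase {p : ℕ} (hp : p ≠ 0) (m s a b : ℤ) :
    omega (p ^ 2) ^ (-((m + p * a) * (s + p * b))) * omega p ^ (s * a) *
      omega (p ^ 2) ^ (m * (s + p * b)) = 1 := by
  rw [← omega_sq_zpow_mul hp, ← zpow_add₀ (omega_ne_zero _), ← zpow_add₀ (omega_ne_zero _),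
    omega_zpow_eq_one_iff (pow_ne_zero 2 hp)]
  exact ⟨-(a * b), by push_cast; ring⟩

lemma natCast_dvd_sub_iff {n : ℕ} (a b : Fin n) : (n : ℤ) ∣ (a : ℤ) - b ↔ a = b := by
  rw [← Nat.modEq_iff_dvd, Nat.ModEq, Nat.mod_eq_of_lt a.isLt, Nat.mod_eq_of_lt b.isLt,
    eq_comm, Fin.val_inj]

lemma ofReal_one_div_sqrt_mul_self (n : ℕ) :
    ((1 / Real.sqrt n : ℝ) : ℂ) * ((1 / Real.sqrt n : ℝ) : ℂ) = (n : ℂ)⁻¹ := by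
  rw [← Complex.ofReal_mul, div_mul_div_comm, one_mul, Real.mul_self_sqrt (Nat.cast_nonneg n)]
  push_cast
  ring

lemma conj_fourierVec_mul_fourierVec (d : ℕ) (j j' k : Fin d) :
    starRingEnd ℂ (fourierVec d j k) * fourierVec d j' k =
      (d : ℂ)⁻¹ * omega d ^ ((k : ℤ) * ((j' : ℤ) - j)) := by
  simp only [fourierVec, map_mul, Complex.conj_ofReal]
  rw [mul_mul_mul_comm, ofReal_one_div_sqrt_mul_self, conj_omega_pow_mul_omega_pow]
  push_cast
  ring_nf

lemma conj_fourierVec_mul_self (d : ℕ) (j k : Fin d) :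
    starRingEnd ℂ (fourierVec d j k) * fourierVec d j k = (d : ℂ)⁻¹ := by
  simp [conj_fourierVec_mul_fourierVec]

lemma sum_conj_fourierVec_mul_fourierVec {d : ℕ} (hd : d ≠ 0) (j j' : Fin d) :
    ∑ k, starRingEnd ℂ (fourierVec d j k) * fourierVec d j' k = if j' = j then 1 else 0 := by
  have hd' : (d : ℂ) ≠ 0 := Nat.cast_ne_zero.2 hd
  simp only [conj_fourierVec_mul_fourierVec, ← Finset.mul_sum, sum_omega_zpow hd,
    natCast_dvd_sub_iff]
  split_ifs <;> simp [hd']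

lemma KDQ_add {d : ℕ} (F G : Matrix (Fin d) (Fin d) ℂ) (i j : Fin d) :
    KDQ d (F + G) i j = KDQ d F i j + KDQ d G i j := by
  simp [KDQ, add_mul, Finset.sum_add_distrib, mul_add]

lemma KDQ_smul {d : ℕ} (a : ℝ) (F : Matrix (Fin d) (Fin d) ℂ) (i j : Fin d) :
    KDQ d (a • F) i j = a * KDQ d F i j := by
  simp only [KDQ, Matrix.smul_apply, Complex.real_smul, mul_assoc, ← Finset.mul_sum]
  ring

lemma KDQ_sum_smul {d : ℕ} {ι : Type*} [Fintype ι] (c : ι → ℝ)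
    (g : ι → Matrix (Fin d) (Fin d) ℂ) (i j : Fin d) :
    KDQ d (∑ t, c t • g t) i j = ∑ t, c t * KDQ d (g t) i j := by
  simp only [KDQ, Matrix.sum_apply, Matrix.smul_apply, Complex.real_smul, Finset.sum_mul,
    Finset.mul_sum]
  rw [Finset.sum_comm]
  ring_nf

lemma KDQ_one {d : ℕ} (i j : Fin d) : KDQ d 1 i j = (d : ℂ)⁻¹ := by
  simp [KDQ, one_apply, conj_fourierVec_mul_self]

lemma KDQ_proj {d : ℕ} (v : Fin d → ℂ) (i j : Fin d) :
    KDQ d (proj d v) i j =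
      starRingEnd ℂ (fourierVec d j i) * v i * ∑ k, starRingEnd ℂ (v k) * fourierVec d j k := by
  simp only [KDQ, proj, of_apply, mul_assoc, ← Finset.mul_sum]

lemma KDQ_proj_stdVec {d : ℕ} (i₀ i j : Fin d) :
    KDQ d (proj d (stdVec d i₀)) i j = if i = i₀ then (d : ℂ)⁻¹ else 0 := by
  rw [KDQ_proj]
  split_ifs with h
  · subst h
    simp [stdVec, conj_fourierVec_mul_self]
  · simp [stdVec, h]

lemma KDQ_proj_fourierVec {d : ℕ} (j₀ i j : Fin d) :
    KDQ d (proj d (fourierVec d j₀)) i j = if j = j₀ then (d : ℂ)⁻¹ else 0 := by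
  rw [KDQ_proj, sum_conj_fourierVec_mul_fourierVec (Fin.pos i).ne']
  split_ifs with h
  · subst h
    rw [mul_one, conj_fourierVec_mul_self]
  · rw [mul_zero]

lemma eq_of_KDQ_eq {d : ℕ} {F G : Matrix (Fin d) (Fin d) ℂ}
    (h : ∀ i j, KDQ d F i j = KDQ d G i j) : F = G := by
  set B : Matrix (Fin d) (Fin d) ℂ := of fun k j => fourierVec d j k
  have hFB : F * B = G * B := by
    ext i j
    have hne : starRingEnd ℂ (fourierVec d j i) ≠ 0 := by
      have := conj_fourierVec_mul_self d j i
      rintro h0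
      rw [h0, zero_mul] at this
      exact inv_ne_zero (Nat.cast_ne_zero.2 (Fin.pos i).ne') this.symm
    exact mul_left_cancel₀ hne (h i j)
  have hBB : B * Bᴴ = 1 := by
    rw [mul_eq_one_comm]
    ext j j'
    simp only [B, mul_apply, conjTranspose_apply, of_apply, RCLike.star_def,
      sum_conj_fourierVec_mul_fourierVec (Fin.pos j).ne', one_apply, eq_comm]
  calc F = F * B * Bᴴ := by rw [Matrix.mul_assoc, hBB, Matrix.mul_one]
    _ = G * B * Bᴴ := by rw [hFB]
    _ = G := by rw [Matrix.mul_assoc, hBB, Matrix.mul_one]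

lemma posSemidef_proj {d : ℕ} (v : Fin d → ℂ) : (proj d v).PosSemidef :=
  posSemidef_vecMulVec_self_star v

lemma trace_proj {d : ℕ} (v : Fin d → ℂ) :
    (proj d v).trace = ∑ i, v i * starRingEnd ℂ (v i) := rfl

lemma trace_proj_stdVec {d : ℕ} (i₀ : Fin d) : (proj d (stdVec d i₀)).trace = 1 := by
  simp [trace_proj, stdVec]

lemma trace_proj_fourierVec {d : ℕ} (j : Fin d) : (proj d (fourierVec d j)).trace = 1 := by
  have hd : (d : ℂ) ≠ 0 := Nat.cast_ne_zero.2 (Fin.pos j).ne'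
  simp [trace_proj, mul_comm (fourierVec d j _), conj_fourierVec_mul_self, hd]

lemma KDplus_subset_KDr (d : ℕ) : KDplus d ⊆ KDr d := fun _ hρ =>
  ⟨hρ.1.1, fun i j => (hρ.2.2 i j).1⟩

def KDrSubmodule (d : ℕ) : Submodule ℝ (Matrix (Fin d) (Fin d) ℂ) where
  carrier := KDr d
  add_mem' hF hG := ⟨hF.1.add hG.1, fun i j => by simp [KDQ_add, hF.2 i j, hG.2 i j]⟩
  zero_mem' := ⟨isHermitian_zero, fun i j => by simp [KDQ]⟩
  smul_mem' a _ hF := ⟨hF.1.smul (IsSelfAdjoint.all a), fun i j => by simp [KDQ_smul, hF.2 i j]⟩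

lemma convex_KDplus (d : ℕ) : Convex ℝ (KDplus d) := by
  intro ρ hρ σ hσ a b ha hb hab
  refine ⟨(hρ.1.smul ha).add (hσ.1.smul hb), ?_, fun i j => ?_⟩
  · simp [trace_add, trace_smul, hρ.2.1, hσ.2.1, ← Complex.ofReal_add, hab]
  · obtain ⟨hρim, hρre⟩ := hρ.2.2 i j
    obtain ⟨hσim, hσre⟩ := hσ.2.2 i j
    simp only [KDQ_add, KDQ_smul, Complex.add_im, Complex.add_re, Complex.re_ofReal_mul,
      Complex.im_ofReal_mul, hρim, hσim, mul_zero, add_zero]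
    exact ⟨trivial, by positivity⟩

lemma sum_smul_mem_convexHull_range {n ι : Type*} [Fintype n] [Fintype ι]
    {g : ι → Matrix n n ℂ} (hg : ∀ t, (g t).trace = 1) {c : ι → ℝ} (hc : ∀ t, 0 ≤ c t)
    (htr : (∑ t, c t • g t).trace = 1) : ∑ t, c t • g t ∈ convexHull ℝ (Set.range g) := by
  have hsum : ∑ t, c t = 1 := by
    simp only [trace_sum, trace_smul, hg, Complex.real_smul, mul_one] at htr
    exact_mod_cast htr
  exact (convex_convexHull ℝ _).sum_mem (fun t _ => hc t) hsum
    (fun t _ => subset_convexHull ℝ _ (Set.mem_range_self t))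

lemma Function.Surjective.exists_section_argmin {I M β : Type*} [Finite I] [LinearOrder β]
    {μ : I → M} (hμ : μ.Surjective) (f : I → β) :
    ∃ ι : M → I, (∀ m, μ (ι m) = m) ∧ ∀ i, f (ι (μ i)) ≤ f i := by
  have hmin : ∀ m, ∃ i, μ i = m ∧ ∀ i', μ i' = m → f i ≤ f i' := fun m =>
    Set.exists_min_image {i | μ i = m} f (Set.toFinite _) (hμ m)
  choose ι hι hιmin using hmin
  exact ⟨ι, hι, fun i => hιmin _ i rfl⟩

lemma exists_shift_nonneg {I J M S : Type*} [Finite I] [Finite J] {μ : I → M} {σ : J → S}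
    (hμ : μ.Surjective) (hσ : σ.Surjective) (α : I → ℝ) (β : J → ℝ) (γ : M → S → ℝ)
    (h : ∀ i j, 0 ≤ α i + β j + γ (μ i) (σ j)) :
    ∃ (X : M → ℝ) (Y : S → ℝ), (∀ i, X (μ i) ≤ α i) ∧ (∀ j, Y (σ j) ≤ β j) ∧
      ∀ m s, 0 ≤ γ m s + X m + Y s := by
  obtain ⟨ι, hι, hιmin⟩ := hμ.exists_section_argmin α
  obtain ⟨κ, hκ, hκmin⟩ := hσ.exists_section_argmin β
  refine ⟨α ∘ ι, β ∘ κ, hιmin, hκmin, fun m s => ?_⟩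
  have := h (ι m) (κ s)
  rw [hι, hκ] at this
  simp only [Function.comp_apply]
  linarith

section

open scoped MatrixOrder

lemma Matrix.IsHermitian.exists_posSemidef_add_smul_one {n : Type*} [Fintype n] [DecidableEq n]
    {F : Matrix n n ℂ} (hF : F.IsHermitian) :
    ∃ t₀ : ℝ, ∀ t, t₀ ≤ t → (F + t • (1 : Matrix n n ℂ)).PosSemidef := by
  set r := ⨅ i, hF.eigenvalues i
  have hr : (F - r • (1 : Matrix n n ℂ)).PosSemidef := by
    rw [← Algebra.algebraMap_eq_smul_one, ← Matrix.le_iff]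
    refine algebraMap_le_of_le_spectrum (fun x hx => ?_) hF.isSelfAdjoint
    obtain ⟨i, rfl⟩ := hF.spectrum_real_eq_range_eigenvalues ▸ hx
    exact ciInf_le (Finite.bddBelow_range _) i
  refine ⟨-r, fun t ht => ?_⟩
  have hsplit : F + t • (1 : Matrix n n ℂ) = (F - r • 1) + (t + r) • 1 := by
    rw [add_smul]; abel
  rw [hsplit]
  exact hr.add (PosSemidef.one.smul (by linarith))

end

lemma mem_span_KDplus_of_posSemidef {d : ℕ} {G : Matrix (Fin d) (Fin d) ℂ} (hG : G.PosSemidef)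
    (hQ : ∀ i j, (KDQ d G i j).im = 0 ∧ 0 ≤ (KDQ d G i j).re) :
    G ∈ Submodule.span ℝ (KDplus d) := by
  obtain ⟨hre, him⟩ := Complex.nonneg_iff.1 hG.trace_nonneg
  have htr : G.trace = (G.trace.re : ℂ) := Complex.ext rfl (by simp [← him])
  rcases hre.eq_or_lt with hc | hc
  · rw [hG.trace_eq_zero_iff.1 (by rw [htr, ← hc, Complex.ofReal_zero])]
    exact zero_mem _
  · set c := G.trace.re
    have hρ : c⁻¹ • G ∈ KDplus d := by
      refine ⟨hG.smul (inv_nonneg.2 hc.le), ?_, fun i j => ?_⟩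
      · rw [trace_smul, htr, Complex.real_smul, ← Complex.ofReal_mul, inv_mul_cancel₀ hc.ne',
          Complex.ofReal_one]
      · simp only [KDQ_smul, Complex.re_ofReal_mul, Complex.im_ofReal_mul, (hQ i j).1, mul_zero]
        exact ⟨trivial, mul_nonneg (inv_nonneg.2 hc.le) (hQ i j).2⟩
    rw [← smul_inv_smul₀ hc.ne' G]
    exact Submodule.smul_mem _ c (Submodule.subset_span hρ)

lemma KDr_subset_span_KDplus (d : ℕ) : KDr d ⊆ Submodule.span ℝ (KDplus d) := by
  intro F hF
  obtain ⟨t₀, ht₀⟩ := hF.1.exists_posSemidef_add_smul_one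
  obtain ⟨t₁, ht₁⟩ := Finite.exists_le fun ij : Fin d × Fin d => -(d * (KDQ d F ij.1 ij.2).re)
  set t := max t₀ t₁
  have hKDQ : ∀ i j, KDQ d (F + t • 1) i j = ((KDQ d F i j).re + t / d : ℝ) := fun i j => by
    apply Complex.ext <;>
      simp [KDQ_add, KDQ_smul, KDQ_one, hF.2 i j, ← Complex.ofReal_natCast, ← Complex.ofReal_inv,
        div_eq_mul_inv]
  have hG : F + t • 1 ∈ Submodule.span ℝ (KDplus d) := by
    refine mem_span_KDplus_of_posSemidef (ht₀ t (le_max_left _ _)) fun i j => ?_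
    have hd : (0 : ℝ) < d := Nat.cast_pos.2 i.pos
    have hq : -(d * (KDQ d F i j).re) ≤ t := (ht₁ (i, j)).trans (le_max_right _ _)
    rw [hKDQ, Complex.ofReal_im, Complex.ofReal_re]
    refine ⟨rfl, ?_⟩
    have : -(KDQ d F i j).re ≤ t / d := by rw [le_div_iff₀ hd]; linarith
    linarith
  have hone : (1 : Matrix (Fin d) (Fin d) ℂ) ∈ Submodule.span ℝ (KDplus d) := by
    refine mem_span_KDplus_of_posSemidef PosSemidef.one fun i j => ?_
    rw [KDQ_one, ← Complex.ofReal_natCast, ← Complex.ofReal_inv, Complex.ofReal_im,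
      Complex.ofReal_re]
    exact ⟨rfl, by positivity⟩
  rw [← add_sub_cancel_right F (t • 1)]
  exact Submodule.sub_mem _ hG (Submodule.smul_mem _ t hone)

theorem KDr_eq_span_of_KDplus_eq_convexHull {d : ℕ} {S : Set (Matrix (Fin d) (Fin d) ℂ)}
    (h : KDplus d = convexHull ℝ S) : KDr d = Submodule.span ℝ S := by
  have hS : S ⊆ KDr d := (subset_convexHull ℝ S).trans (h ▸ KDplus_subset_KDr d)
  refine subset_antisymm ((KDr_subset_span_KDplus d).trans ?_) ?_
  · rw [h]
    exact Submodule.span_le.2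
      (convexHull_min Submodule.subset_span (Submodule.span ℝ S).convex)
  · exact Submodule.span_le.2 (show S ⊆ KDrSubmodule d from hS)

section Square

variable {p : ℕ}

def gridEquiv (p : ℕ) : Fin p × Fin p ≃ Fin (p ^ 2) :=
  finProdFinEquiv.trans (finCongr (sq p).symm)

lemma gridEquiv_val (x : Fin p × Fin p) : (gridEquiv p x : ℕ) = x.2 + p * x.1 :=
  finProdFinEquiv_apply_val x

lemma psiPQ_gridEquiv (m s a m' : Fin p) :
    psiPQ (p ^ 2) p p m s (gridEquiv p (a, m')) =
      if m' = m then ((1 / Real.sqrt p : ℝ) : ℂ) * omega p ^ (s * a : ℕ) else 0 := by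
  have hp : 0 < p := m.pos
  simp only [psiPQ, gridEquiv_val, Nat.add_mul_mod_self_left, Nat.mod_eq_of_lt m'.isLt,
    Nat.add_mul_div_left _ _ hp, Nat.div_eq_of_lt m'.isLt, zero_add, Fin.val_inj]

lemma sum_conj_psiPQ_mul_fourierVec (m s b s' : Fin p) :
    ∑ k, starRingEnd ℂ (psiPQ (p ^ 2) p p m s k) * fourierVec (p ^ 2) (gridEquiv p (b, s')) k =
      if s' = s then
        (p : ℂ) * ((1 / Real.sqrt p : ℝ) : ℂ) * ((1 / Real.sqrt (p ^ 2 : ℕ) : ℝ) : ℂ) *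
          omega (p ^ 2) ^ ((m : ℤ) * (s' + p * b))
      else 0 := by
  have hp : p ≠ 0 := m.pos.ne'
  have hterm : ∀ a : Fin p,
      starRingEnd ℂ (psiPQ (p ^ 2) p p m s (gridEquiv p (a, m))) *
        fourierVec (p ^ 2) (gridEquiv p (b, s')) (gridEquiv p (a, m)) =
      ((1 / Real.sqrt p : ℝ) : ℂ) * ((1 / Real.sqrt (p ^ 2 : ℕ) : ℝ) : ℂ) *
        omega (p ^ 2) ^ ((m : ℤ) * (s' + p * b)) *
        omega p ^ ((a : ℤ) * ((s' : ℤ) - s + p * b)) := by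
    intro a
    rw [psiPQ_gridEquiv, if_pos rfl, fourierVec, gridEquiv_val, gridEquiv_val, map_mul,
      Complex.conj_ofReal, conj_omega_pow, ← zpow_natCast]
    have key := omega_sq_zpow_add_mul hp ((m : ℤ) * (s' + p * b)) (a * (s' + p * b))
    push_cast at key ⊢
    rw [show ((m : ℤ) + p * a) * (s' + p * b) = m * (s' + p * b) + p * (a * (s' + p * b)) by ring,
      key, show (a : ℤ) * (s' - s + p * b) = -(s * a) + a * (s' + p * b) by ring,
      zpow_add₀ (omega_ne_zero p)]
    ring
  have hcol : ∀ a : Fin p, ∑ m' : Fin p,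
      starRingEnd ℂ (psiPQ (p ^ 2) p p m s (gridEquiv p (a, m'))) *
        fourierVec (p ^ 2) (gridEquiv p (b, s')) (gridEquiv p (a, m')) =
      starRingEnd ℂ (psiPQ (p ^ 2) p p m s (gridEquiv p (a, m))) *
        fourierVec (p ^ 2) (gridEquiv p (b, s')) (gridEquiv p (a, m)) := fun a =>
    Finset.sum_eq_single m (fun m' _ hm' => by rw [psiPQ_gridEquiv, if_neg hm', map_zero, zero_mul])
      (by simp)
  have hdvd : (p : ℤ) ∣ (s' : ℤ) - s + p * b ↔ s' = s :=
    (dvd_add_left (dvd_mul_right _ _)).trans (natCast_dvd_sub_iff s' s)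
  rw [← (gridEquiv p).sum_comp, Fintype.sum_prod_type]
  simp only [hcol, hterm, ← Finset.mul_sum, sum_omega_zpow hp, hdvd]
  split_ifs <;> ring

lemma KDQ_proj_psiPQ (m s a m' b s' : Fin p) :
    KDQ (p ^ 2) (proj (p ^ 2) (psiPQ (p ^ 2) p p m s)) (gridEquiv p (a, m'))
        (gridEquiv p (b, s')) = if (m', s') = (m, s) then ((p ^ 2 : ℕ) : ℂ)⁻¹ else 0 := by
  have hp : p ≠ 0 := m.pos.ne'
  rw [KDQ_proj, psiPQ_gridEquiv, sum_conj_psiPQ_mul_fourierVec]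
  by_cases hm : m' = m
  · by_cases hs : s' = s
    · subst hm hs
      simp only [if_true, fourierVec, map_mul, Complex.conj_ofReal, conj_omega_pow,
        gridEquiv_val, ← zpow_natCast (omega p)]
      have hphase := omega_sq_phase hp m' s' a b
      have hr := ofReal_one_div_sqrt_mul_self (p ^ 2)
      have hq := ofReal_one_div_sqrt_mul_self p
      generalize ((1 / √(p ^ 2 : ℕ) : ℝ) : ℂ) = r at hr ⊢
      generalize ((1 / √p : ℝ) : ℂ) = q at hq ⊢
      have hpC : (p : ℂ) ≠ 0 := Nat.cast_ne_zero.2 hp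
      push_cast at hphase hr ⊢
      calc _ = (r * r) * (q * q) * p *
              (omega (p ^ 2) ^ (-((m' + p * a) * (s' + p * b) : ℤ)) * omega p ^ ((s' * a : ℤ)) *
                omega (p ^ 2) ^ ((m' : ℤ) * (s' + p * b))) := by ring
        _ = _ := by
          rw [hphase, hr, hq]
          field_simp
    · simp [hs]
  · simp [hm]

lemma trace_proj_psiPQ (m s : Fin p) : (proj (p ^ 2) (psiPQ (p ^ 2) p p m s)).trace = 1 := by
  have hp : (p : ℂ) ≠ 0 := Nat.cast_ne_zero.2 m.pos.ne'
  have hcol : ∀ a : Fin p, ∑ m' : Fin p,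
      psiPQ (p ^ 2) p p m s (gridEquiv p (a, m')) *
        starRingEnd ℂ (psiPQ (p ^ 2) p p m s (gridEquiv p (a, m'))) = (p : ℂ)⁻¹ := by
    intro a
    rw [Finset.sum_eq_single m (fun m' _ hm' => by rw [psiPQ_gridEquiv, if_neg hm', zero_mul])
      (by simp), psiPQ_gridEquiv, if_pos rfl, map_mul, Complex.conj_ofReal, mul_mul_mul_comm,
      ofReal_one_div_sqrt_mul_self, mul_comm (omega p ^ _), conj_omega_pow_mul_omega_pow, sub_self,
      zpow_zero, mul_one]
  rw [trace_proj, ← (gridEquiv p).sum_comp, Fintype.sum_prod_type]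
  simp [hcol, hp]

abbrev GeneratorIndex (p : ℕ) := (Fin (p ^ 2) ⊕ Fin (p ^ 2)) ⊕ (Fin p × Fin p)

def generator (p : ℕ) : GeneratorIndex p → Matrix (Fin (p ^ 2)) (Fin (p ^ 2)) ℂ :=
  Sum.elim
    (Sum.elim (fun i => proj (p ^ 2) (stdVec (p ^ 2) i))
      (fun j => proj (p ^ 2) (fourierVec (p ^ 2) j)))
    (fun ms => proj (p ^ 2) (psiPQ (p ^ 2) p p ms.1 ms.2))

lemma range_generator :
    Set.range (generator p) = setA (p ^ 2) ∪ setB (p ^ 2) ∪ setC2 (p ^ 2) p := by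
  simp only [generator, Set.Sum.elim_range]
  congr 1; congr 1
  all_goals ext M; simp [setA, setB, setC2, eq_comm]

lemma trace_generator (t : GeneratorIndex p) : (generator p t).trace = 1 := by
  rcases t with (i | j) | ⟨m, s⟩
  · exact trace_proj_stdVec i
  · exact trace_proj_fourierVec j
  · exact trace_proj_psiPQ m s

def residue (i : Fin (p ^ 2)) : Fin p := ((gridEquiv p).symm i).2

lemma residue_gridEquiv (a m : Fin p) : residue (gridEquiv p (a, m)) = m := by
  simp [residue]

lemma residue_surjective : Function.Surjective (residue (p := p)) := fun m =>
  ⟨gridEquiv p (m, m), residue_gridEquiv m m⟩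

lemma KDQ_sum_smul_generator (c : GeneratorIndex p → ℝ) (i j : Fin (p ^ 2)) :
    KDQ (p ^ 2) (∑ t, c t • generator p t) i j =
      (((c (.inl (.inl i)) + c (.inl (.inr j)) + c (.inr (residue i, residue j))) /
        (p ^ 2 : ℕ) : ℝ) : ℂ) := by
  obtain ⟨⟨a, m⟩, rfl⟩ := (gridEquiv p).surjective i
  obtain ⟨⟨b, s⟩, rfl⟩ := (gridEquiv p).surjective j
  rw [KDQ_sum_smul, Fintype.sum_sum_type, Fintype.sum_sum_type]
  simp only [generator, Sum.elim_inl, Sum.elim_inr, KDQ_proj_stdVec, KDQ_proj_fourierVec,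
    KDQ_proj_psiPQ, Prod.mk.eta, residue_gridEquiv, mul_ite, mul_zero, Finset.sum_ite_eq,
    Finset.mem_univ, if_true]
  push_cast
  ring

lemma generator_mem_KDplus (t : GeneratorIndex p) : generator p t ∈ KDplus (p ^ 2) := by
  refine ⟨by rcases t with (_ | _) | _ <;> exact posSemidef_proj _, trace_generator t,
    fun i j => ?_⟩
  obtain ⟨⟨a, m⟩, rfl⟩ := (gridEquiv p).surjective i
  obtain ⟨⟨b, s⟩, rfl⟩ := (gridEquiv p).surjective j
  rcases t with (_ | _) | _ <;>
    simp only [generator, Sum.elim_inl, Sum.elim_inr, KDQ_proj_stdVec, KDQ_proj_fourierVec,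
      KDQ_proj_psiPQ] <;>
    split_ifs <;>
    simp only [← Complex.ofReal_natCast, ← Complex.ofReal_inv, Complex.ofReal_im,
      Complex.ofReal_re, Complex.zero_im, Complex.zero_re, le_refl, true_and] <;>
    positivity

lemma exists_nonneg_coeffs_generator (c : GeneratorIndex p → ℝ)
    (h : ∀ i j, 0 ≤ c (.inl (.inl i)) + c (.inl (.inr j)) + c (.inr (residue i, residue j))) :
    ∃ c' : GeneratorIndex p → ℝ, (∀ t, 0 ≤ c' t) ∧
      ∑ t, c' t • generator p t = ∑ t, c t • generator p t := by
  obtain ⟨X, Y, hX, hY, hXY⟩ := exists_shift_nonneg residue_surjective residue_surjective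
    (fun i => c (.inl (.inl i))) (fun j => c (.inl (.inr j))) (fun m s => c (.inr (m, s))) h
  refine ⟨Sum.elim (Sum.elim (fun i => c (.inl (.inl i)) - X (residue i))
    (fun j => c (.inl (.inr j)) - Y (residue j))) (fun ms => c (.inr ms) + X ms.1 + Y ms.2),
    ?_, eq_of_KDQ_eq fun i j => ?_⟩
  · rintro ((i | j) | ⟨m, s⟩)
    · exact sub_nonneg.2 (hX i)
    · exact sub_nonneg.2 (hY j)
    · exact hXY m s
  · simp only [KDQ_sum_smul_generator, Sum.elim_inl, Sum.elim_inr]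
    ring_nf

theorem KDplus_eq_convexHull_of_KDr_eq_span
    (h : KDr (p ^ 2) = Submodule.span ℝ (setA (p ^ 2) ∪ setB (p ^ 2) ∪ setC2 (p ^ 2) p)) :
    KDplus (p ^ 2) = convexHull ℝ (setA (p ^ 2) ∪ setB (p ^ 2) ∪ setC2 (p ^ 2) p) := by
  rw [← range_generator] at h ⊢
  refine subset_antisymm (fun ρ hρ => ?_)
    (convexHull_min (Set.range_subset_iff.2 generator_mem_KDplus) (convex_KDplus _))
  have hρspan : ρ ∈ (Submodule.span ℝ (Set.range (generator p)) : Set _) :=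
    h ▸ KDplus_subset_KDr _ hρ
  obtain ⟨c, rfl⟩ := (Submodule.mem_span_range_iff_exists_fun ℝ).1 hρspan
  obtain ⟨c', hc'0, hc'⟩ := exists_nonneg_coeffs_generator c fun i j => by
    have := (hρ.2.2 i j).2
    rw [KDQ_sum_smul_generator, Complex.ofReal_re] at this
    simpa using (le_div_iff₀ (Nat.cast_pos.2 i.pos)).1 this
  rw [← hc'] at hρ ⊢
  exact sum_smul_mem_convexHull_range trace_generator hc'0 hρ.2.1

end Square

theorem stmt3_general (p d : ℕ) (hd : d = p ^ 2) :
    KDr d = (Submodule.span ℝ (setA d ∪ setB d ∪ setC2 d p) :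
        Set (Matrix (Fin d) (Fin d) ℂ)) ↔
      KDplus d = convexHull ℝ (setA d ∪ setB d ∪ setC2 d p) := by
  subst hd
  exact ⟨KDplus_eq_convexHull_of_KDr_eq_span, KDr_eq_span_of_KDplus_eq_convexHull⟩

/-- For `d = p²` with `p` prime,
`KD^r = span_ℝ(A ∪ B ∪ C)` iff `KD⁺ = ConvHull(A ∪ B ∪ C)`. -/
theorem stmt3 (p d : ℕ) (hp : p.Prime) (hd : d = p ^ 2) :
    KDr d = (Submodule.span ℝ (setA d ∪ setB d ∪ setC2 d p) :
        Set (Matrix (Fin d) (Fin d) ℂ)) ↔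
      KDplus d = convexHull ℝ (setA d ∪ setB d ∪ setC2 d p) :=
  stmt3_general p d hd
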